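/- Let ω : ℝ^d → ℝⁿ be a linear map whose operator norm (from the Euclidean norm on ℝ^d to the Euclidean norm on ℝⁿ) is at most 1. Suppose a polyhedral 1-chain Z with ℝⁿ-coefficients consists of segments whose coefficient vector h_i satisfies ⟨ω(τ_i), h_i⟩ = ‖h_i‖ for the unit orientation τ_i of the segment (Euclidean norm on ℝⁿ). Then for every polyhedral 1-chain Z' with ℝⁿ-coefficients and the same boundary 0-chain, mass(Z) ≤ mass(Z'), where mass is the sum over segments of (Euclidean norm of the coefficient) × (segment length). In particular a calibrated chain is mass-minimizing even among chains with real (not just integer) coefficients. -/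

import Mathlib

/-!
Calibration argument. Pairing a chain `∑ i, h i [a i, b i]` with the constant form `ω` gives
`∑ i, ⟪ω (b i - a i), h i⟫`; as `ω` is constant, Stokes' theorem says this depends only on the
boundary `∑ i, h i (δ_{b i} - δ_{a i})`. Since `‖ω‖ ≤ 1`, Cauchy–Schwarz bounds the pairing of any
chain by its mass, with equality for the calibrated chain `Z`. Hence
`mass Z = ⟨Z, ω⟩ = ⟨Z', ω⟩ ≤ mass Z'`.
-/

open scoped Classical

open Finset RealInnerProductSpace

variable {ι E F : Type*} [Fintype ι] [NormedAddCommGroup F] [InnerProductSpace ℝ F]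

/-- The boundary of the polyhedral chain `∑ i, h i [a i, b i]`, as a function on points. -/
def chainBoundary [DecidableEq E] (a b : ι → E) (h : ι → F) (x : E) : F :=
  (∑ i, if b i = x then h i else 0) - ∑ i, if a i = x then h i else 0

def chainMass [SeminormedAddCommGroup E] (a b : ι → E) (h : ι → F) : ℝ :=
  ∑ i, ‖h i‖ * ‖b i - a i‖

/-- The pairing of the chain `∑ i, h i [a i, b i]` with the constant `F`-valued form `ω`. -/
def chainFlux [AddCommGroup E] [Module ℝ E] (ω : E →ₗ[ℝ] F) (a b : ι → E) (h : ι → F) : ℝ :=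
  ∑ i, ⟪ω (b i - a i), h i⟫

theorem sum_inner_eq_sum_inner_sum_ite [DecidableEq E] (f : E → F) (p : ι → E) (g : ι → F)
    {S : Finset E} (hS : ∀ i, p i ∈ S) :
    ∑ i, ⟪f (p i), g i⟫ = ∑ x ∈ S, ⟪f x, ∑ i, if p i = x then g i else 0⟫ := by
  simp_rw [← Finset.sum_filter, inner_sum]
  rw [← Finset.sum_fiberwise_of_maps_to (g := p) (t := S) fun i _ => hS i]
  refine Finset.sum_congr rfl fun x _ => Finset.sum_congr rfl fun i hi => ?_
  rw [(Finset.mem_filter.1 hi).2]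

section Stokes

variable [DecidableEq E] [AddCommGroup E] [Module ℝ E] (ω : E →ₗ[ℝ] F)

theorem chainFlux_eq_sum_inner_chainBoundary {a b : ι → E} (h : ι → F) {S : Finset E}
    (ha : ∀ i, a i ∈ S) (hb : ∀ i, b i ∈ S) :
    chainFlux ω a b h = ∑ x ∈ S, ⟪ω x, chainBoundary a b h x⟫ := by
  simp only [chainFlux, chainBoundary, map_sub, inner_sub_left, inner_sub_right,
    Finset.sum_sub_distrib, sum_inner_eq_sum_inner_sum_ite ω b h hb,
    sum_inner_eq_sum_inner_sum_ite ω a h ha]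

theorem chainFlux_eq_of_chainBoundary_eq {ι' : Type*} [Fintype ι'] {a b : ι → E} {h : ι → F}
    {a' b' : ι' → E} {h' : ι' → F} (hbd : chainBoundary a b h = chainBoundary a' b' h') :
    chainFlux ω a b h = chainFlux ω a' b' h' := by
  set S := (univ.image a ∪ univ.image b) ∪ (univ.image a' ∪ univ.image b')
  rw [chainFlux_eq_sum_inner_chainBoundary ω h (S := S) (by simp [S]) (by simp [S]),
    chainFlux_eq_sum_inner_chainBoundary ω h' (S := S) (by simp [S]) (by simp [S]), hbd]

end Stokes

section Calibration

variable [NormedAddCommGroup E] [NormedSpace ℝ E] {ω : E →ₗ[ℝ] F}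

theorem chainFlux_le_chainMass (hω : ∀ v, ‖ω v‖ ≤ ‖v‖) (a b : ι → E) (h : ι → F) :
    chainFlux ω a b h ≤ chainMass a b h :=
  Finset.sum_le_sum fun i _ => calc
    ⟪ω (b i - a i), h i⟫ ≤ ‖ω (b i - a i)‖ * ‖h i‖ := real_inner_le_norm _ _
    _ ≤ ‖b i - a i‖ * ‖h i‖ := by gcongr; exact hω _
    _ = ‖h i‖ * ‖b i - a i‖ := mul_comm _ _

theorem norm_smul_inv_norm_smul_self (v : E) : ‖v‖ • ‖v‖⁻¹ • v = v := by
  rcases eq_or_ne v 0 with rfl | hv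
  · simp
  · exact smul_inv_smul₀ (norm_ne_zero_iff.2 hv) v

theorem chainFlux_eq_chainMass_of_calibrated {a b : ι → E} {h : ι → F}
    (hcal : ∀ i, ⟪ω (‖b i - a i‖⁻¹ • (b i - a i)), h i⟫ = ‖h i‖) :
    chainFlux ω a b h = chainMass a b h := by
  refine Finset.sum_congr rfl fun i _ => ?_
  rw [← norm_smul_inv_norm_smul_self (b i - a i), map_smul, real_inner_smul_left,
    norm_smul_inv_norm_smul_self, hcal, mul_comm]

end Calibration

theorem stmt18_general {d n : ℕ}
    (ω : EuclideanSpace ℝ (Fin d) →ₗ[ℝ] EuclideanSpace ℝ (Fin n))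
    (hω : ∀ v, ‖ω v‖ ≤ ‖v‖)
    {m m' : ℕ}
    (a b : Fin m → EuclideanSpace ℝ (Fin d)) (h : Fin m → EuclideanSpace ℝ (Fin n))
    (a' b' : Fin m' → EuclideanSpace ℝ (Fin d)) (h' : Fin m' → EuclideanSpace ℝ (Fin n))
    (hcal : ∀ i, (inner ℝ (ω (‖b i - a i‖⁻¹ • (b i - a i))) (h i) : ℝ) = ‖h i‖)
    (hbd : ∀ x : EuclideanSpace ℝ (Fin d),
      ((∑ i, if b i = x then h i else 0) - ∑ i, if a i = x then h i else 0)
        = ((∑ k, if b' k = x then h' k else 0) - ∑ k, if a' k = x then h' k else 0)) :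
    ∑ i, ‖h i‖ * ‖b i - a i‖ ≤ ∑ k, ‖h' k‖ * ‖b' k - a' k‖ :=
  calc chainMass a b h
      = chainFlux ω a b h := (chainFlux_eq_chainMass_of_calibrated hcal).symm
    _ = chainFlux ω a' b' h' := chainFlux_eq_of_chainBoundary_eq ω (funext hbd)
    _ ≤ chainMass a' b' h' := chainFlux_le_chainMass hω a' b' h'

theorem stmt18 {d n : ℕ}
    (ω : EuclideanSpace ℝ (Fin d) →ₗ[ℝ] EuclideanSpace ℝ (Fin n))
    (hω : ∀ v, ‖ω v‖ ≤ ‖v‖)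
    {m m' : ℕ}
    (a b : Fin m → EuclideanSpace ℝ (Fin d)) (h : Fin m → EuclideanSpace ℝ (Fin n))
    (a' b' : Fin m' → EuclideanSpace ℝ (Fin d)) (h' : Fin m' → EuclideanSpace ℝ (Fin n))
    (hne : ∀ i, b i ≠ a i)
    (hcal : ∀ i, (inner ℝ (ω (‖b i - a i‖⁻¹ • (b i - a i))) (h i) : ℝ) = ‖h i‖)
    (hbd : ∀ x : EuclideanSpace ℝ (Fin d),
      ((∑ i, if b i = x then h i else 0) - ∑ i, if a i = x then h i else 0)
        = ((∑ k, if b' k = x then h' k else 0) - ∑ k, if a' k = x then h' k else 0)) :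
    ∑ i, ‖h i‖ * ‖b i - a i‖ ≤ ∑ k, ‖h' k‖ * ‖b' k - a' k‖ :=
  stmt18_general ω hω a b h a' b' h' hcal hbd
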